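/- Let n ≥ 1, let L̄ be a complex polynomial of degree exactly n, let k ∈ ℕ be such that L̄(j+k) ≠ 0 for every integer j ≥ 1, and set σ = inf_{j≥1} |L̄(j+k)|/jⁿ (which is positive). Let M(z, y₀,…,y_n) = Σ_{p≥0} Σ_{q=(q₀,…,q_n)∈ℤ₊^{n+1}} α_{p,q} z^p y₀^{q₀}⋯y_n^{q_n} be holomorphic in a neighbourhood of 0 ∈ ℂ^{n+2}, and let M̃(z,w) = Σ_{p,q} |α_{p,q}| z^p w^{q₀+⋯+q_n}, which is holomorphic in a neighbourhood of (0,0) ∈ ℂ². Let ψ̂ = Σ_{j≥1} c_j z^j be the unique formal power series with zero constant term satisfying L̄(δ+k)ψ̂ = z·M(z, ψ̂, δψ̂, …, δⁿψ̂). Then the equation σ·δⁿv = z·M̃(z, δⁿv) has a unique formal power series solution ψ = Σ_{j≥1} C_j z^j with zero constant term; this ψ has positive radius of convergence; all its coefficients C_j are nonnegative reals; and |c_j| ≤ C_j for every j ≥ 1 (so ψ is a majorant series for ψ̂). -/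

import Mathlib

/-!
Both `ψ̂` and the majorant solution `ψ` are fixed points of maps `u ↦ D⁻¹ (z · F(u))` with `D`
diagonal (eigenvalues `L̄(j+k)`, resp. `σ jⁿ`), and the `j`-th coefficient of `z · F(u)` only
depends on the coefficients of `u` below `j`. Such a map has a unique fixed point, built
coefficient by coefficient. Since `σ jⁿ ≤ |L̄(j+k)|`, and substituting series majorized by `δⁿψ`
into `M` is majorized by substituting `δⁿψ` for every `y_i` in `|M|`, i.e. into `M̃`, induction on
`j` gives `|c_j| ≤ C_j`. For convergence, `v = δⁿψ` solves `σ v = z M̃(z, v)` with `M̃` absolutely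
convergent on a polydisc of radius `r`; for small `ρ` the partial sums `Σ_{m<t} |v_m| ρ^m` stay
below `r`, by induction on `t`. Finally `σ > 0` because `|L̄(j+k)| / jⁿ` tends to the modulus of
the leading coefficient.
-/

open PowerSeries

/-- Euler derivative `δu = z·u'`: coefficientwise `(δu)_j = j·u_j`. -/
noncomputable def eulerD (u : PowerSeries ℂ) : PowerSeries ℂ :=
  PowerSeries.mk fun j => (j : ℂ) * PowerSeries.coeff j u

/-- Substitution of one-variable power series (with zero constant terms)
into a multivariate formal power series. -/
noncomputable def substSeries {m : ℕ} (F : MvPowerSeries (Fin m) ℂ)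
    (u : Fin m → PowerSeries ℂ) : PowerSeries ℂ :=
  PowerSeries.mk fun j =>
    ∑' d : Fin m →₀ ℕ, MvPowerSeries.coeff d F *
      PowerSeries.coeff j (∏ i : Fin m, (u i) ^ (d i))

/-- `F` is (the Taylor series at 0 of) a function holomorphic in a neighbourhood
of `0 ∈ ℂ^m`: absolute convergence on some polydisk of positive radius. -/
def ConvNearZero {m : ℕ} (F : MvPowerSeries (Fin m) ℂ) : Prop :=
  ∃ r : ℝ, 0 < r ∧ Summable fun d : Fin m →₀ ℕ =>
    ‖MvPowerSeries.coeff d F‖ * r ^ (d.sum fun _ v => v)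

/-- Positive radius of convergence of a formal power series. -/
def PosRadius (u : PowerSeries ℂ) : Prop :=
  ∃ R : ℝ, 0 < R ∧ Summable fun j : ℕ => ‖PowerSeries.coeff j u‖ * R ^ j

/-- The tuple `(z, φ, δφ, …, δⁿφ)` to be substituted into `F(z,y₀,…,y_n)`. -/
noncomputable def phiArgs (n : ℕ) (φ : PowerSeries ℂ) : Fin (n + 2) → PowerSeries ℂ :=
  fun i => if (i : ℕ) = 0 then PowerSeries.X else eulerD^[(i : ℕ) - 1] φ

/-- Formal partial derivative of a multivariate power series. -/
noncomputable def pderivMv {m : ℕ} (i : Fin m) (F : MvPowerSeries (Fin m) ℂ) :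
    MvPowerSeries (Fin m) ℂ :=
  fun d => ((d i : ℂ) + 1) * MvPowerSeries.coeff (d + Finsupp.single i 1) F


/-- The shifted Euler derivative `(δ + k) u`. -/
noncomputable def dshift (k : ℕ) (u : PowerSeries ℂ) : PowerSeries ℂ :=
  eulerD u + (k : ℂ) • u

/-- `L̄(δ+k)u = Σᵢ bᵢ (δ+k)ⁱ u` for a polynomial `L̄(ξ) = Σᵢ bᵢ ξⁱ`. -/
noncomputable def LpolyOp (L : Polynomial ℂ) (k : ℕ) (u : PowerSeries ℂ) : PowerSeries ℂ :=
  ∑ i ∈ Finset.range (L.natDegree + 1), L.coeff i • (dshift k)^[i] u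

/-- The majorant series `M̃(z,w) = Σ_{p,q} |α_{p,q}| z^p w^{q₀+⋯+q_n}` built from
`M(z,y₀,…,y_n) = Σ_{p,q} α_{p,q} z^p y₀^{q₀}⋯y_n^{q_n}`; the two variables `(z,w)` are
indexed by `Fin 2`, `z` at 0 and `w` at 1. -/
noncomputable def majorantSeries (n : ℕ) (M : MvPowerSeries (Fin (n + 2)) ℂ) :
    MvPowerSeries (Fin 2) ℂ :=
  fun d : Fin 2 →₀ ℕ =>
    ∑' q : {q : Fin (n + 1) →₀ ℕ // (q.sum fun _ v => v) = d 1},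
      (‖MvPowerSeries.coeff
          (Finsupp.mapDomain Fin.succ (q : Fin (n + 1) →₀ ℕ) + Finsupp.single 0 (d 0)) M‖ : ℂ)

open Filter Topology
open scoped ComplexOrder

lemma coeff_iterate_eulerD (i m : ℕ) (u : ℂ⟦X⟧) :
    coeff m (eulerD^[i] u) = (m : ℂ) ^ i * coeff m u := by
  induction i with
  | zero => simp
  | succ i ih => rw [Function.iterate_succ_apply', eulerD, coeff_mk, ih]; ring

lemma constantCoeff_iterate_eulerD {u : ℂ⟦X⟧} (hu : constantCoeff u = 0) (i : ℕ) :
    constantCoeff (eulerD^[i] u) = 0 := by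
  rw [← coeff_zero_eq_constantCoeff_apply, coeff_iterate_eulerD, coeff_zero_eq_constantCoeff_apply,
    hu, mul_zero]

lemma trunc_iterate_eulerD_congr {u w : ℂ⟦X⟧} {N : ℕ} (h : trunc N u = trunc N w) (i : ℕ) :
    trunc N (eulerD^[i] u) = trunc N (eulerD^[i] w) := Polynomial.ext fun m => by
  have hm := Polynomial.ext_iff.1 h m
  simp only [coeff_trunc, coeff_iterate_eulerD] at hm ⊢
  split_ifs at hm ⊢
  exacts [congrArg _ hm, rfl]

lemma PosRadius.of_iterate_eulerD {u : ℂ⟦X⟧} (hu : constantCoeff u = 0) {n : ℕ}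
    (h : PosRadius (eulerD^[n] u)) : PosRadius u := by
  obtain ⟨R, hR, hsum⟩ := h
  refine ⟨R, hR, hsum.of_nonneg_of_le (fun _ => by positivity) fun m => ?_⟩
  rw [coeff_iterate_eulerD, norm_mul, norm_pow, Complex.norm_natCast]
  rcases m.eq_zero_or_pos with rfl | hm
  · simp [hu]
  · exact mul_le_mul_of_nonneg_right
      (le_mul_of_one_le_left (norm_nonneg _) (one_le_pow₀ (by exact_mod_cast hm))) (by positivity)

lemma coeff_iterate_dshift (k i j : ℕ) (u : ℂ⟦X⟧) :
    coeff j ((dshift k)^[i] u) = ((j + k : ℕ) : ℂ) ^ i * coeff j u := by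
  induction i with
  | zero => simp
  | succ i ih =>
    rw [Function.iterate_succ_apply', dshift, map_add, map_smul, eulerD, coeff_mk, ih]
    push_cast
    ring

lemma coeff_LpolyOp (L : Polynomial ℂ) (k j : ℕ) (u : ℂ⟦X⟧) :
    coeff j (LpolyOp L k u) = L.eval ((j + k : ℕ) : ℂ) * coeff j u := by
  simp only [LpolyOp, map_sum, map_smul, coeff_iterate_dshift, Polynomial.eval_eq_sum_range,
    Finset.sum_mul, smul_eq_mul, mul_assoc]

lemma iInf_pos_of_tendsto {f : ℕ → ℝ} (hf : ∀ j, 0 < f j) {l : ℝ} (hl : 0 < l)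
    (h : Tendsto f atTop (𝓝 l)) : 0 < ⨅ j, f j := by
  obtain ⟨B, hB⟩ := (h.inv₀ hl.ne').bddAbove_range
  have hB' : ∀ j, (f j)⁻¹ ≤ B := fun j => hB ⟨j, rfl⟩
  have hBpos : 0 < B := (inv_pos.2 (hf 0)).trans_le (hB' 0)
  refine (inv_pos.2 hBpos).trans_le (le_ciInf fun j => ?_)
  exact (inv_le_comm₀ (hf j) hBpos).1 (hB' j)

lemma Polynomial.tendsto_eval_div_pow_natDegree {𝕜 : Type*} [NormedField 𝕜] (L : Polynomial 𝕜)
    {x : ℕ → 𝕜}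
    (hx : Tendsto (fun j => (x j)⁻¹) atTop (𝓝 0)) (hx0 : ∀ j, x j ≠ 0) :
    Tendsto (fun j => L.eval (x j) / x j ^ L.natDegree) atTop (𝓝 L.leadingCoeff) := by
  have hrev : ∀ j, L.eval (x j) / x j ^ L.natDegree = L.reverse.eval (x j)⁻¹ := by
    intro j
    let := invertibleOfNonzero (hx0 j)
    rw [div_eq_iff (pow_ne_zero _ (hx0 j)), ← Polynomial.eval₂_id, ← Polynomial.eval₂_id,
      ← Polynomial.eval₂_reverse_mul_pow (RingHom.id 𝕜) (x j) L, invOf_eq_inv]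
  simp_rw [hrev]
  rw [← Polynomial.coeff_zero_reverse, Polynomial.coeff_zero_eq_eval_zero]
  exact (L.reverse.continuous.tendsto 0).comp hx

theorem iInf_norm_eval_div_pow_pos {L : Polynomial ℂ} {n : ℕ} (hdeg : L.degree = n) {k : ℕ}
    (hLk : ∀ j : ℕ, 1 ≤ j → L.eval ((j + k : ℕ) : ℂ) ≠ 0) :
    0 < ⨅ j : ℕ, ‖L.eval ((j + 1 + k : ℕ) : ℂ)‖ / ((j + 1 : ℕ) : ℝ) ^ n := by
  have hnat : L.natDegree = n := Polynomial.natDegree_eq_of_degree_eq_some hdeg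
  have hL0 : L ≠ 0 := by rintro rfl; simp at hdeg
  set x : ℕ → ℂ := fun j => ((j + 1 + k : ℕ) : ℂ)
  have hx0 : ∀ j, x j ≠ 0 := fun j => Nat.cast_ne_zero.2 (by omega)
  have hx : Tendsto (fun j => (x j)⁻¹) atTop (𝓝 0) :=
    tendsto_inv_atTop_nhds_zero_nat.comp
      (tendsto_atTop_mono (fun j => show j ≤ j + 1 + k by omega) tendsto_id)
  set g : ℕ → ℝ := fun j => ‖L.eval (x j)‖ / ((j + 1 + k : ℕ) : ℝ) ^ n
  have hg : Tendsto g atTop (𝓝 ‖L.leadingCoeff‖) := by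
    convert (L.tendsto_eval_div_pow_natDegree hx hx0).norm using 2 with j
    simp only [g, x, hnat, norm_div, norm_pow, Complex.norm_natCast]
  have hgpos : ∀ j, 0 < g j := fun j => div_pos (norm_pos_iff.2 (hLk (j + 1) (by omega)))
    (by positivity)
  calc 0 < ⨅ j, g j := iInf_pos_of_tendsto hgpos (by simpa using hL0) hg
    _ ≤ _ := ciInf_mono ⟨0, by rintro _ ⟨j, rfl⟩; exact (hgpos j).le⟩ fun j =>
        div_le_div_of_nonneg_left (norm_nonneg _) (by positivity)
          (pow_le_pow_left₀ (by positivity) (by push_cast; linarith) n)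

section Picard

variable {K : Type*} [Field K]

def IsCausal (F : K⟦X⟧ → K⟦X⟧) : Prop :=
  ∀ j u w, trunc (j + 1) u = trunc (j + 1) w → coeff j (F u) = coeff j (F w)

/-- `u ↦ D⁻¹ (X * F u)` for the diagonal operator `D` with eigenvalues `ℓ j`. -/
noncomputable def picardMap (ℓ : ℕ → K) (F : K⟦X⟧ → K⟦X⟧) (u : K⟦X⟧) : K⟦X⟧ :=
  mk fun j => (ℓ j)⁻¹ * coeff j (X * F u)

variable {ℓ : ℕ → K} {F : K⟦X⟧ → K⟦X⟧}

lemma constantCoeff_picardMap (u : K⟦X⟧) : constantCoeff (picardMap ℓ F u) = 0 := by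
  rw [← coeff_zero_eq_constantCoeff_apply, picardMap, coeff_mk, coeff_zero_X_mul, mul_zero]

lemma IsCausal.coeff_picardMap_congr (hF : IsCausal F) {j : ℕ} {u w : K⟦X⟧}
    (h : trunc j u = trunc j w) : coeff j (picardMap ℓ F u) = coeff j (picardMap ℓ F w) := by
  rcases j with _ | j
  · simp [picardMap]
  · simp only [picardMap, coeff_mk, coeff_succ_X_mul, hF j u w h]

lemma IsCausal.coeff_picardMap_trunc (hF : IsCausal F) (j : ℕ) (u : K⟦X⟧) :
    coeff j (picardMap ℓ F (trunc j u)) = coeff j (picardMap ℓ F u) :=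
  hF.coeff_picardMap_congr (trunc_trunc u)

lemma picardMap_eq_self_iff (D : K⟦X⟧ → K⟦X⟧) (hD : ∀ j u, coeff j (D u) = ℓ j * coeff j u)
    (hℓ : ∀ j, ℓ (j + 1) ≠ 0) (u : K⟦X⟧) :
    picardMap ℓ F u = u ↔ constantCoeff u = 0 ∧ D u = X * F u := by
  constructor
  · intro hu
    refine ⟨hu ▸ constantCoeff_picardMap u, ext fun j => ?_⟩
    have hj := congrArg (coeff j) hu
    rw [picardMap, coeff_mk] at hj
    rw [hD, ← hj]
    rcases j with _ | j
    · simp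
    · rw [mul_inv_cancel_left₀ (hℓ j)]
  · rintro ⟨hu0, hDu⟩
    ext j
    rw [picardMap, coeff_mk, ← hDu, hD]
    rcases j with _ | j
    · simp [hu0]
    · rw [inv_mul_cancel_left₀ (hℓ j)]

noncomputable def picardCoeff (ℓ : ℕ → K) (F : K⟦X⟧ → K⟦X⟧) (j : ℕ) : K :=
  coeff j (picardMap ℓ F (mk fun m => if _ : m < j then picardCoeff ℓ F m else 0))

lemma IsCausal.picardMap_mk_picardCoeff (hF : IsCausal F) :
    picardMap ℓ F (mk (picardCoeff ℓ F)) = mk (picardCoeff ℓ F) := by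
  ext j
  rw [coeff_mk, picardCoeff]
  refine hF.coeff_picardMap_congr (Polynomial.ext fun m => ?_)
  simp only [coeff_trunc, coeff_mk]
  split_ifs <;> rfl

lemma IsCausal.eq_of_picardMap_eq_self (hF : IsCausal F) {u w : K⟦X⟧}
    (hu : picardMap ℓ F u = u) (hw : picardMap ℓ F w = w) : u = w := by
  ext j
  induction j using Nat.strong_induction_on with
  | _ j ih =>
    have htrunc : trunc j u = trunc j w := Polynomial.ext fun m => by
      simp only [coeff_trunc]
      split_ifs with hm
      exacts [ih m hm, rfl]
    rw [← hu, ← hw, hF.coeff_picardMap_congr htrunc]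

theorem IsCausal.existsUnique_picardMap_eq_self (hF : IsCausal F) :
    ∃! u, picardMap ℓ F u = u :=
  ⟨_, hF.picardMap_mk_picardCoeff, fun _ hw => hF.eq_of_picardMap_eq_self hw
    hF.picardMap_mk_picardCoeff⟩

end Picard

section Substitution

variable {m : ℕ}

lemma trunc_prod_pow_congr {ι : Type*} (s : Finset ι) {u w : ι → ℂ⟦X⟧} {N : ℕ}
    (h : ∀ i, trunc N (u i) = trunc N (w i)) (d : ι → ℕ) :
    trunc N (∏ i ∈ s, u i ^ d i) = trunc N (∏ i ∈ s, w i ^ d i) := by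
  classical
  induction s using Finset.induction_on with
  | empty => rfl
  | insert i s hi ih =>
    rw [Finset.prod_insert hi, Finset.prod_insert hi, ← trunc_trunc_mul_trunc, ih,
      ← trunc_trunc_pow, h i, trunc_trunc_pow, trunc_trunc_mul_trunc]

lemma coeff_substSeries_congr (F : MvPowerSeries (Fin m) ℂ) {u w : Fin m → ℂ⟦X⟧} {j : ℕ}
    (h : ∀ i, trunc (j + 1) (u i) = trunc (j + 1) (w i)) :
    coeff j (substSeries F u) = coeff j (substSeries F w) := by
  simp only [substSeries, coeff_mk]
  congr! 2 with d
  rw [← coeff_coe_trunc_of_lt (Nat.lt_succ_self j), trunc_prod_pow_congr _ h,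
    coeff_coe_trunc_of_lt (Nat.lt_succ_self j)]

lemma coeff_prod_pow_eq_zero_of_lt_degree {u : Fin m → ℂ⟦X⟧}
    (hu : ∀ i, constantCoeff (u i) = 0) {d : Fin m →₀ ℕ} {j : ℕ} (hj : j < d.degree) :
    coeff j (∏ i, u i ^ d i) = 0 := by
  refine X_pow_dvd_iff.1 ?_ j hj
  rw [Finsupp.degree_eq_sum, ← Finset.prod_pow_eq_pow_sum]
  exact Finset.prod_dvd_prod_of_dvd _ _ fun i _ => pow_dvd_pow_of_dvd (X_dvd_iff.2 (hu i)) _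

lemma support_substSeries_term_subset (F : MvPowerSeries (Fin m) ℂ) {u : Fin m → ℂ⟦X⟧}
    (hu : ∀ i, constantCoeff (u i) = 0) (j : ℕ) :
    (Function.support fun d => MvPowerSeries.coeff d F * coeff j (∏ i, u i ^ d i)) ⊆
      {d | d.degree ≤ j} := fun d hd => by
  by_contra hdj
  exact hd (by simp only [coeff_prod_pow_eq_zero_of_lt_degree hu (not_le.1 hdj), mul_zero])

lemma coeff_substSeries_eq_sum (F : MvPowerSeries (Fin m) ℂ) {u : Fin m → ℂ⟦X⟧}
    (hu : ∀ i, constantCoeff (u i) = 0) {j : ℕ} {s : Finset (Fin m →₀ ℕ)}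
    (hs : ∀ d : Fin m →₀ ℕ, d.degree ≤ j → d ∈ s) :
    coeff j (substSeries F u) = ∑ d ∈ s, MvPowerSeries.coeff d F * coeff j (∏ i, u i ^ d i) := by
  rw [substSeries, coeff_mk]
  refine tsum_eq_sum fun d hd => ?_
  by_contra hne
  exact hd (hs d (support_substSeries_term_subset F hu j hne))

end Substitution

section Majorizes

/-- `w` is a majorant series of `u`: `|u_m| ≤ w_m` for all `m`, in the partial order of `ℂ`
(so the coefficients of `w` are nonnegative reals). -/
def Majorizes (u w : ℂ⟦X⟧) : Prop :=
  ∀ m, (‖coeff m u‖ : ℂ) ≤ coeff m w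

lemma Majorizes.coeff_nonneg {u w : ℂ⟦X⟧} (h : Majorizes u w) (m : ℕ) : 0 ≤ coeff m w :=
  (Complex.zero_le_real.2 (norm_nonneg _)).trans (h m)

lemma majorizes_self_of_coeff_nonneg {w : ℂ⟦X⟧} (hw : ∀ m, 0 ≤ coeff m w) : Majorizes w w :=
  fun m => (RCLike.norm_of_nonneg' (hw m)).le

lemma majorizes_X : Majorizes X X :=
  majorizes_self_of_coeff_nonneg fun m => by rw [coeff_X]; split_ifs <;> simp

lemma majorizes_one : Majorizes 1 1 :=
  majorizes_self_of_coeff_nonneg fun m => by rw [coeff_one]; split_ifs <;> simp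

lemma Majorizes.mul {u₁ u₂ w₁ w₂ : ℂ⟦X⟧} (h₁ : Majorizes u₁ w₁) (h₂ : Majorizes u₂ w₂) :
    Majorizes (u₁ * u₂) (w₁ * w₂) := fun m => by
  rw [coeff_mul, coeff_mul]
  calc (‖∑ p ∈ Finset.HasAntidiagonal.antidiagonal m, coeff p.1 u₁ * coeff p.2 u₂‖ : ℂ)
      ≤ ∑ p ∈ Finset.HasAntidiagonal.antidiagonal m, (‖coeff p.1 u₁‖ : ℂ) * ‖coeff p.2 u₂‖ := by
        exact_mod_cast norm_sum_le_of_le _ fun p _ => (norm_mul _ _).le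
    _ ≤ _ := Finset.sum_le_sum fun p _ => mul_le_mul (h₁ p.1) (h₂ p.2)
        (Complex.zero_le_real.2 (norm_nonneg _)) (h₁.coeff_nonneg p.1)

lemma Majorizes.pow {u w : ℂ⟦X⟧} (h : Majorizes u w) (s : ℕ) : Majorizes (u ^ s) (w ^ s) := by
  induction s with
  | zero => simpa using majorizes_one
  | succ s ih => simpa only [pow_succ] using ih.mul h

lemma Majorizes.prod_pow {ι : Type*} (s : Finset ι) {u w : ι → ℂ⟦X⟧}
    (h : ∀ i, Majorizes (u i) (w i)) (d : ι → ℕ) :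
    Majorizes (∏ i ∈ s, u i ^ d i) (∏ i ∈ s, w i ^ d i) := by
  classical
  induction s using Finset.induction_on with
  | empty => simpa using majorizes_one
  | insert i s hi ih =>
    simpa only [Finset.prod_insert hi] using ((h i).pow (d i)).mul ih

lemma Majorizes.iterate_eulerD {u w : ℂ⟦X⟧} (h : Majorizes u w) (hu : constantCoeff u = 0)
    {i n : ℕ} (hin : i ≤ n) : Majorizes (eulerD^[i] u) (eulerD^[n] w) := fun m => by
  rw [coeff_iterate_eulerD, coeff_iterate_eulerD, norm_mul, norm_pow, Complex.norm_natCast]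
  rcases m.eq_zero_or_pos with rfl | hm
  · simpa [hu] using mul_nonneg (pow_nonneg le_rfl n) (h.coeff_nonneg 0)
  · push_cast
    exact mul_le_mul (pow_le_pow_right₀ (by exact_mod_cast hm) hin) (h m)
      (Complex.zero_le_real.2 (norm_nonneg _)) (by positivity)

lemma Majorizes.exists_real_coeff {u w : ℂ⟦X⟧} (h : Majorizes u w) (m : ℕ) :
    ∃ C : ℝ, 0 ≤ C ∧ coeff m w = C ∧ ‖coeff m u‖ ≤ C := by
  obtain ⟨hre, him⟩ := Complex.le_def.1 (h m)
  exact ⟨(coeff m w).re, (norm_nonneg _).trans (by simpa using hre),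
    Complex.ext rfl (by simpa using him.symm), by simpa using hre⟩

theorem Majorizes.substSeries {m : ℕ} {F F' : MvPowerSeries (Fin m) ℂ}
    (hF : ∀ d, (‖MvPowerSeries.coeff d F‖ : ℂ) ≤ MvPowerSeries.coeff d F')
    {u w : Fin m → ℂ⟦X⟧} (hu : ∀ i, constantCoeff (u i) = 0)
    (hw : ∀ i, constantCoeff (w i) = 0) (h : ∀ i, Majorizes (u i) (w i)) :
    Majorizes (substSeries F u) (substSeries F' w) := fun j => by
  have hs : ∀ d : Fin m →₀ ℕ, d.degree ≤ j → d ∈ (Finsupp.finite_of_degree_le j).toFinset :=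
    fun d hd => (Set.Finite.mem_toFinset _).2 hd
  rw [coeff_substSeries_eq_sum F hu hs, coeff_substSeries_eq_sum F' hw hs]
  calc (‖∑ d ∈ (Finsupp.finite_of_degree_le j).toFinset,
        MvPowerSeries.coeff d F * coeff j (∏ i, u i ^ d i)‖ : ℂ)
      ≤ ∑ d ∈ (Finsupp.finite_of_degree_le j).toFinset,
        (‖MvPowerSeries.coeff d F‖ : ℂ) * ‖coeff j (∏ i, u i ^ d i)‖ := by
        exact_mod_cast norm_sum_le_of_le _ fun p _ => (norm_mul _ _).le
    _ ≤ _ := Finset.sum_le_sum fun d _ => mul_le_mul (hF d) (Majorizes.prod_pow _ h d j)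
        (Complex.zero_le_real.2 (norm_nonneg _))
        ((Complex.zero_le_real.2 (norm_nonneg _)).trans (hF d))

end Majorizes

lemma constantCoeff_coe_trunc {R : Type*} [Semiring R] (N : ℕ) {v : R⟦X⟧}
    (hv : constantCoeff v = 0) : constantCoeff (trunc N v : R⟦X⟧) = 0 := by
  rw [← coeff_zero_eq_constantCoeff_apply, Polynomial.coeff_coe, coeff_trunc]
  split_ifs <;> simp [hv]

section MajorantMethod

variable {κ : ℕ → ℂ} {ℓ : ℕ → ℝ} {F G : ℂ⟦X⟧ → ℂ⟦X⟧}

lemma Majorizes.picardMap (hℓ : ∀ j, 0 < ℓ (j + 1) ∧ ℓ (j + 1) ≤ ‖κ (j + 1)‖) {u w : ℂ⟦X⟧}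
    (h : Majorizes (F u) (G w)) :
    Majorizes (picardMap κ F u) (picardMap (fun j => (ℓ j : ℂ)) G w) := fun j => by
  rcases j with _ | j
  · simp [constantCoeff_picardMap]
  simp only [_root_.picardMap, coeff_mk, coeff_succ_X_mul, norm_mul, norm_inv]
  push_cast
  have hinv : (‖κ (j + 1)‖⁻¹ : ℝ) ≤ (ℓ (j + 1))⁻¹ := inv_anti₀ (hℓ j).1 (hℓ j).2
  exact mul_le_mul (by exact_mod_cast hinv) (h j) (Complex.zero_le_real.2 (norm_nonneg _))
    (by exact_mod_cast (inv_pos.2 (hℓ j).1).le)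

theorem majorizes_of_picardMap_eq_self (hF : IsCausal F) (hG : IsCausal G)
    (hℓ : ∀ j, 0 < ℓ (j + 1) ∧ ℓ (j + 1) ≤ ‖κ (j + 1)‖)
    (hmaj : ∀ u w, constantCoeff u = 0 → constantCoeff w = 0 → Majorizes u w →
      Majorizes (F u) (G w))
    {u w : ℂ⟦X⟧} (hu : picardMap κ F u = u) (hw : picardMap (fun j => (ℓ j : ℂ)) G w = w) :
    Majorizes u w := by
  have hu0 : constantCoeff u = 0 := hu ▸ constantCoeff_picardMap u
  have hw0 : constantCoeff w = 0 := hw ▸ constantCoeff_picardMap w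
  intro j
  induction j using Nat.strong_induction_on with
  | _ j ih =>
    have htr : Majorizes (trunc j u) (trunc j w) := fun m => by
      simp only [Polynomial.coeff_coe, coeff_trunc]
      split_ifs with hm
      exacts [ih m hm, by simp]
    have := Majorizes.picardMap hℓ (hmaj _ _ (constantCoeff_coe_trunc j hu0) (constantCoeff_coe_trunc j hw0) htr) j
    rwa [hF.coeff_picardMap_trunc, hG.coeff_picardMap_trunc, hu, hw] at this

end MajorantMethod

section MajorantSeries

instance (k s : ℕ) : Finite {q : Fin k →₀ ℕ // (q.sum fun _ v => v) = s} :=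
  (Finsupp.finite_of_degree_eq s).to_subtype

lemma Finsupp.sum_id_eq_degree {σ : Type*} (d : σ →₀ ℕ) : (d.sum fun _ v => v) = d.degree :=
  rfl

lemma Finsupp.degree_cons {k : ℕ} (p : ℕ) (q : Fin k →₀ ℕ) :
    (Finsupp.cons p q).degree = p + q.degree := by
  simp [Finsupp.degree_eq_sum, Fin.sum_univ_succ]

lemma Finsupp.mapDomain_succ_add_single_zero {k : ℕ} (p : ℕ) (q : Fin k →₀ ℕ) :
    Finsupp.mapDomain Fin.succ q + Finsupp.single 0 p = Finsupp.cons p q := by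
  ext i
  cases i using Fin.cases with
  | zero =>
    simp [Finsupp.mapDomain_of_notMem_range _ _ fun ⟨x, hx⟩ => Fin.succ_ne_zero (n := k) x hx]
  | succ i => simp [Finsupp.mapDomain_apply (Fin.succ_injective _)]

/-- A multi-index `e` on `(z, y₀, …, y_n)` is split into the exponents `(e 0, |q|)` of
`(z, w)` and the exponent `q` of `(y₀, …, y_n)`. -/
noncomputable def consSigmaEquiv (n : ℕ) :
    (Σ d : Fin 2 →₀ ℕ, {q : Fin (n + 1) →₀ ℕ // (q.sum fun _ v => v) = d 1}) ≃
      (Fin (n + 2) →₀ ℕ) where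
  toFun p := Finsupp.cons (p.1 0) p.2
  invFun e := ⟨Finsupp.cons (e 0) (Finsupp.single 0 (Finsupp.tail e).degree),
    ⟨Finsupp.tail e, by
      rw [show (1 : Fin 2) = Fin.succ 0 from rfl, Finsupp.cons_succ, Finsupp.single_eq_same]
      rfl⟩⟩
  left_inv := by
    rintro ⟨d, q, hq⟩
    refine Sigma.subtype_ext ?_ (Finsupp.tail_cons _ _)
    ext i
    cases i using Fin.cases with
    | zero => simp
    | succ i =>
      rw [Fin.fin_one_eq_zero i]
      simp only [Finsupp.cons_succ, Finsupp.tail_cons, Finsupp.single_eq_same]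
      exact hq
  right_inv e := Finsupp.cons_tail e

@[simp]
lemma consSigmaEquiv_apply {n : ℕ}
    (p : Σ d : Fin 2 →₀ ℕ, {q : Fin (n + 1) →₀ ℕ // (q.sum fun _ v => v) = d 1}) :
    consSigmaEquiv n p = Finsupp.cons (p.1 0) p.2 := rfl

noncomputable def normSeries {σ : Type*} (F : MvPowerSeries σ ℂ) : MvPowerSeries σ ℂ :=
  fun d => (‖MvPowerSeries.coeff d F‖ : ℂ)

lemma coeff_normSeries {σ : Type*} (F : MvPowerSeries σ ℂ) (d : σ →₀ ℕ) :
    MvPowerSeries.coeff d (normSeries F) = ‖MvPowerSeries.coeff d F‖ := rfl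

variable {n : ℕ} {M : MvPowerSeries (Fin (n + 2)) ℂ}

lemma coeff_majorantSeries (d : Fin 2 →₀ ℕ) :
    MvPowerSeries.coeff d (majorantSeries n M) =
      ∑' q : {q : Fin (n + 1) →₀ ℕ // (q.sum fun _ v => v) = d 1},
        (‖MvPowerSeries.coeff (Finsupp.cons (d 0) (q : Fin (n + 1) →₀ ℕ)) M‖ : ℂ) := by
  simp only [majorantSeries, MvPowerSeries.coeff_apply, Finsupp.mapDomain_succ_add_single_zero]

lemma prod_cons_X_pow_eq (w : ℂ⟦X⟧) (p : ℕ) (q : Fin (n + 1) →₀ ℕ) :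
    ∏ i, (Fin.cons X fun _ => w : Fin (n + 2) → ℂ⟦X⟧) i ^ Finsupp.cons p q i =
      X ^ p * w ^ q.degree := by
  simp [Fin.prod_univ_succ, Finsupp.degree_eq_sum, Finset.prod_pow_eq_pow_sum]

theorem substSeries_normSeries_cons {w : ℂ⟦X⟧} (hw : constantCoeff w = 0) :
    substSeries (normSeries M) (Fin.cons X fun _ => w) =
      substSeries (majorantSeries n M) ![X, w] := by
  have hargs : ∀ i, constantCoeff ((Fin.cons X fun _ => w : Fin (n + 2) → ℂ⟦X⟧) i) = 0 :=
    Fin.cases (by simp) fun _ => by simpa using hw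
  ext j
  have hsum : Summable fun e => MvPowerSeries.coeff e (normSeries M) *
      coeff j (∏ i, (Fin.cons X fun _ => w : Fin (n + 2) → ℂ⟦X⟧) i ^ e i) :=
    summable_of_hasFiniteSupport ((Finsupp.finite_of_degree_le j).subset
      (support_substSeries_term_subset (normSeries M) hargs j))
  have hsum' := (consSigmaEquiv n).summable_iff.2 hsum
  rw [Function.comp_def] at hsum'
  rw [substSeries, substSeries, coeff_mk, coeff_mk, ← (consSigmaEquiv n).tsum_eq,
    Summable.tsum_sigma' (fun _ => Summable.of_finite) hsum']
  refine tsum_congr fun d => ?_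
  rw [coeff_majorantSeries, ← tsum_mul_right]
  refine tsum_congr fun ⟨q, hq⟩ => ?_
  simp only [consSigmaEquiv_apply, coeff_normSeries, prod_cons_X_pow_eq, Fin.prod_univ_two]
  rw [show q.degree = d 1 from hq]
  rfl

theorem ConvNearZero.majorantSeries (hM : ConvNearZero M) : ConvNearZero (majorantSeries n M) := by
  obtain ⟨r, hr, hsum⟩ := hM
  refine ⟨r, hr, ((consSigmaEquiv n).summable_iff.2 hsum).sigma.congr fun d => ?_⟩
  rw [coeff_majorantSeries, ← Complex.ofReal_tsum,
    Complex.norm_of_nonneg (tsum_nonneg fun _ => norm_nonneg _), ← tsum_mul_right]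
  refine tsum_congr fun ⟨q, hq⟩ => ?_
  rw [Function.comp_apply, consSigmaEquiv_apply, Finsupp.sum_id_eq_degree,
    Finsupp.sum_id_eq_degree, Finsupp.degree_cons, Finsupp.degree_eq_sum d, Fin.sum_univ_two]
  rw [Finsupp.sum_id_eq_degree] at hq
  rw [hq]

end MajorantSeries

section Convergence

noncomputable def normPartialSum (ρ : ℝ) (t : ℕ) (u : ℂ⟦X⟧) : ℝ :=
  ∑ m ∈ Finset.range t, ‖coeff m u‖ * ρ ^ m

variable {ρ : ℝ}

lemma normPartialSum_nonneg (hρ : 0 ≤ ρ) (t : ℕ) (u : ℂ⟦X⟧) : 0 ≤ normPartialSum ρ t u :=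
  Finset.sum_nonneg fun _ _ => by positivity

lemma normPartialSum_mul_le (hρ : 0 ≤ ρ) (t : ℕ) (u w : ℂ⟦X⟧) :
    normPartialSum ρ t (u * w) ≤ normPartialSum ρ t u * normPartialSum ρ t w := by
  set a : ℕ → ℝ := fun k => ‖coeff k u‖ * ρ ^ k
  set b : ℕ → ℝ := fun l => ‖coeff l w‖ * ρ ^ l
  calc normPartialSum ρ t (u * w)
      ≤ ∑ m ∈ Finset.range t, ∑ k ∈ Finset.range (m + 1), a k * b (m - k) := by
        refine Finset.sum_le_sum fun m _ => ?_
        rw [coeff_mul, Finset.Nat.sum_antidiagonal_eq_sum_range_succ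
          (fun i j => coeff i u * coeff j w)]
        calc ‖∑ k ∈ Finset.range (m + 1), coeff k u * coeff (m - k) w‖ * ρ ^ m
            ≤ (∑ k ∈ Finset.range (m + 1), ‖coeff k u‖ * ‖coeff (m - k) w‖) * ρ ^ m := by
              gcongr
              exact norm_sum_le_of_le _ fun k _ => norm_mul_le _ _
          _ = _ := by
              rw [Finset.sum_mul]
              refine Finset.sum_congr rfl fun k hk => ?_
              rw [show ρ ^ m = ρ ^ k * ρ ^ (m - k) by
                rw [← pow_add, Nat.add_sub_cancel' (Nat.lt_succ_iff.1 (Finset.mem_range.1 hk))]]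
              ring
    _ = ∑ k ∈ Finset.range t, ∑ l ∈ Finset.range (t - k), a k * b l :=
        Finset.sum_range_diag_flip t fun k l => a k * b l
    _ ≤ ∑ k ∈ Finset.range t, ∑ l ∈ Finset.range t, a k * b l :=
        Finset.sum_le_sum fun k _ => Finset.sum_le_sum_of_subset_of_nonneg
          (Finset.range_subset_range.2 (Nat.sub_le t k)) fun _ _ _ => by positivity
    _ = _ := (Finset.sum_mul_sum _ _ _ _).symm

lemma normPartialSum_X_pow_le (hρ : 0 ≤ ρ) (t k : ℕ) : normPartialSum ρ t (X ^ k) ≤ ρ ^ k := by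
  simp only [normPartialSum, coeff_X_pow, apply_ite (‖·‖), norm_one, norm_zero, ite_mul, one_mul,
    zero_mul, Finset.sum_ite_eq']
  split_ifs
  exacts [le_rfl, by positivity]

lemma normPartialSum_pow_le (hρ : 0 ≤ ρ) (t : ℕ) (u : ℂ⟦X⟧) (s : ℕ) :
    normPartialSum ρ t (u ^ s) ≤ normPartialSum ρ t u ^ s := by
  induction s with
  | zero => simpa using normPartialSum_X_pow_le hρ t 0
  | succ s ih =>
    rw [pow_succ, pow_succ]
    exact (normPartialSum_mul_le hρ t _ _).trans
      (mul_le_mul_of_nonneg_right ih (normPartialSum_nonneg hρ t u))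

lemma normPartialSum_succ_of_smul_eq_X_mul {c : ℂ} (hc : c ≠ 0) {v f : ℂ⟦X⟧}
    (hv0 : constantCoeff v = 0) (hv : c • v = X * f) (t : ℕ) :
    normPartialSum ρ (t + 1) v = ρ / ‖c‖ * normPartialSum ρ t f := by
  rw [normPartialSum, Finset.sum_range_succ', normPartialSum, Finset.mul_sum]
  simp only [coeff_zero_eq_constantCoeff_apply, hv0, norm_zero, zero_mul, add_zero]
  refine Finset.sum_congr rfl fun m _ => ?_
  have hm := congrArg (coeff (m + 1)) hv
  rw [map_smul, smul_eq_mul, coeff_succ_X_mul] at hm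
  rw [← hm, norm_mul, pow_succ]
  field_simp

lemma normPartialSum_substSeries_le (hρ : 0 ≤ ρ) {G : MvPowerSeries (Fin 2) ℂ} {r : ℝ}
    (hρr : ρ ≤ r) (hG : Summable fun d => ‖MvPowerSeries.coeff d G‖ * r ^ (d.sum fun _ v => v))
    {v : ℂ⟦X⟧} (hv0 : constantCoeff v = 0) {t : ℕ} (hvr : normPartialSum ρ t v ≤ r) :
    normPartialSum ρ t (substSeries G ![X, v]) ≤
      ∑' d, ‖MvPowerSeries.coeff d G‖ * r ^ (d.sum fun _ v => v) := by
  have hargs : ∀ i, constantCoeff (![X, v] i) = 0 := fun i => by fin_cases i <;> simp [hv0]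
  have hr : 0 ≤ r := hρ.trans hρr
  set s := (Finsupp.finite_of_degree_le (σ := Fin 2) t).toFinset
  calc normPartialSum ρ t (substSeries G ![X, v])
      ≤ ∑ m ∈ Finset.range t, ∑ d ∈ s,
          ‖MvPowerSeries.coeff d G‖ * (‖coeff m (X ^ d 0 * v ^ d 1)‖ * ρ ^ m) := by
        refine Finset.sum_le_sum fun m hm => ?_
        rw [coeff_substSeries_eq_sum G hargs (s := s) fun d hd => (Set.Finite.mem_toFinset _).2
          (hd.trans (Finset.mem_range.1 hm).le)]
        simp only [Fin.prod_univ_two, Matrix.cons_val_zero, Matrix.cons_val_one, ← mul_assoc,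
          ← Finset.sum_mul]
        gcongr
        exact norm_sum_le_of_le _ fun d _ => norm_mul_le _ _
    _ = ∑ d ∈ s, ‖MvPowerSeries.coeff d G‖ * normPartialSum ρ t (X ^ d 0 * v ^ d 1) := by
        rw [Finset.sum_comm]
        simp only [normPartialSum, Finset.mul_sum]
    _ ≤ ∑ d ∈ s, ‖MvPowerSeries.coeff d G‖ * r ^ (d.sum fun _ v => v) := by
        refine Finset.sum_le_sum fun d _ => mul_le_mul_of_nonneg_left ?_ (norm_nonneg _)
        rw [Finsupp.sum_id_eq_degree, Finsupp.degree_eq_sum, Fin.sum_univ_two, pow_add]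
        calc normPartialSum ρ t (X ^ d 0 * v ^ d 1)
            ≤ normPartialSum ρ t (X ^ d 0) * normPartialSum ρ t (v ^ d 1) :=
              normPartialSum_mul_le hρ t _ _
          _ ≤ ρ ^ d 0 * normPartialSum ρ t v ^ d 1 :=
              mul_le_mul (normPartialSum_X_pow_le hρ t _) (normPartialSum_pow_le hρ t v _)
                (normPartialSum_nonneg hρ t _) (by positivity)
          _ ≤ r ^ d 0 * r ^ d 1 :=
              mul_le_mul (pow_le_pow_left₀ hρ hρr _)
                (pow_le_pow_left₀ (normPartialSum_nonneg hρ t v) hvr _)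
                (pow_nonneg (normPartialSum_nonneg hρ t v) _) (pow_nonneg hr _)
    _ ≤ _ := hG.sum_le_tsum s fun _ _ => by positivity

theorem posRadius_of_smul_eq_X_mul_substSeries {G : MvPowerSeries (Fin 2) ℂ}
    (hG : ConvNearZero G) {c : ℂ} (hc : c ≠ 0) {v : ℂ⟦X⟧} (hv0 : constantCoeff v = 0)
    (hv : c • v = X * substSeries G ![X, v]) : PosRadius v := by
  obtain ⟨r, hr, hsum⟩ := hG
  set S := ∑' d, ‖MvPowerSeries.coeff d G‖ * r ^ (d.sum fun _ v => v)
  have hS : 0 ≤ S := tsum_nonneg fun _ => by positivity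
  have hc' : 0 < ‖c‖ := norm_pos_iff.2 hc
  set ρ := min r (‖c‖ * r / (S + 1))
  have hρ : 0 < ρ := lt_min hr (by positivity)
  have hρS : ρ * S ≤ ‖c‖ * r := by
    have := (le_div_iff₀ (by positivity : 0 < S + 1)).1 (min_le_right r (‖c‖ * r / (S + 1)))
    nlinarith
  have hbound : ∀ t, normPartialSum ρ t v ≤ r := by
    intro t
    induction t with
    | zero => simpa [normPartialSum] using hr.le
    | succ t ih =>
      rw [normPartialSum_succ_of_smul_eq_X_mul hc hv0 hv]
      calc ρ / ‖c‖ * normPartialSum ρ t (substSeries G ![X, v]) ≤ ρ / ‖c‖ * S := by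
            gcongr
            exact normPartialSum_substSeries_le hρ.le (min_le_left _ _) hsum hv0 ih
        _ ≤ r := by rw [div_mul_eq_mul_div, div_le_iff₀ hc']; linarith
  exact ⟨ρ, hρ, summable_of_sum_range_le (fun _ => by positivity) hbound⟩

end Convergence

section MajorantEquation

variable (n : ℕ)

lemma phiArgs_zero (φ : ℂ⟦X⟧) : phiArgs n φ 0 = X := rfl

lemma phiArgs_succ (φ : ℂ⟦X⟧) (i : Fin (n + 1)) : phiArgs n φ i.succ = eulerD^[i] φ := by
  simp [phiArgs]

lemma isCausal_substSeries_phiArgs (M : MvPowerSeries (Fin (n + 2)) ℂ) :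
    IsCausal fun u => substSeries M (phiArgs n u) := fun j u w h =>
  coeff_substSeries_congr M fun i => by
    cases i using Fin.cases with
    | zero => rfl
    | succ i => simp only [phiArgs_succ, trunc_iterate_eulerD_congr h]

lemma isCausal_substSeries_X_iterate_eulerD (G : MvPowerSeries (Fin 2) ℂ) :
    IsCausal fun u => substSeries G ![X, eulerD^[n] u] := fun j u w h =>
  coeff_substSeries_congr G fun i => by
    fin_cases i
    · rfl
    · exact trunc_iterate_eulerD_congr h n

theorem majorizes_substSeries_phiArgs (M : MvPowerSeries (Fin (n + 2)) ℂ) {u w : ℂ⟦X⟧}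
    (hu : constantCoeff u = 0) (hw : constantCoeff w = 0) (h : Majorizes u w) :
    Majorizes (substSeries M (phiArgs n u))
      (substSeries (majorantSeries n M) ![X, eulerD^[n] w]) := by
  rw [← substSeries_normSeries_cons (constantCoeff_iterate_eulerD hw n)]
  refine Majorizes.substSeries (fun d => le_rfl) (Fin.cases (by simp [phiArgs_zero]) fun i => ?_)
    (Fin.cases (by simp) fun i => ?_) (Fin.cases majorizes_X fun i => ?_)
  · rw [phiArgs_succ]
    exact constantCoeff_iterate_eulerD hu i
  · exact constantCoeff_iterate_eulerD hw n
  · rw [phiArgs_succ]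
    exact h.iterate_eulerD hu (Nat.lt_succ_iff.1 i.isLt)

lemma picardMap_eq_self_iff_smul_iterate_eulerD {σ : ℝ} (hσ : σ ≠ 0) {F : ℂ⟦X⟧ → ℂ⟦X⟧}
    (ψ : ℂ⟦X⟧) : picardMap (fun j => ((σ * (j : ℝ) ^ n : ℝ) : ℂ)) F ψ = ψ ↔
      constantCoeff ψ = 0 ∧ (σ : ℂ) • eulerD^[n] ψ = X * F ψ :=
  picardMap_eq_self_iff (fun u => (σ : ℂ) • eulerD^[n] u)
    (fun j u => by simp [coeff_iterate_eulerD, mul_assoc])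
    (fun j => by exact_mod_cast mul_ne_zero hσ (pow_ne_zero n (Nat.cast_add_one_ne_zero j))) ψ

lemma picardMap_eq_self_iff_LpolyOp {L : Polynomial ℂ} {k : ℕ}
    (hLk : ∀ j : ℕ, 1 ≤ j → L.eval ((j + k : ℕ) : ℂ) ≠ 0) {F : ℂ⟦X⟧ → ℂ⟦X⟧} (u : ℂ⟦X⟧) :
    picardMap (fun j => L.eval ((j + k : ℕ) : ℂ)) F u = u ↔
      constantCoeff u = 0 ∧ LpolyOp L k u = X * F u :=
  picardMap_eq_self_iff (LpolyOp L k) (coeff_LpolyOp L k)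
    (fun j => hLk (j + 1) (Nat.le_add_left 1 j)) u

end MajorantEquation

theorem majorant_equation_lemma_general (n : ℕ)
    (L : Polynomial ℂ) (hdeg : L.degree = (n : ℕ)) (k : ℕ)
    (hLk : ∀ j : ℕ, 1 ≤ j → L.eval ((j + k : ℕ) : ℂ) ≠ 0)
    (σ : ℝ)
    (hσ : σ = ⨅ j : ℕ, ‖L.eval ((j + 1 + k : ℕ) : ℂ)‖ / ((j + 1 : ℕ) : ℝ) ^ n)
    (M : MvPowerSeries (Fin (n + 2)) ℂ) (hM : ConvNearZero M)
    (ψhat : PowerSeries ℂ) (hψhat0 : PowerSeries.constantCoeff ψhat = 0)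
    (hψhat : LpolyOp L k ψhat = PowerSeries.X * substSeries M (phiArgs n ψhat)) :
    0 < σ ∧
    ∃ ψ : PowerSeries ℂ,
      (PowerSeries.constantCoeff ψ = 0 ∧
        (σ : ℂ) • eulerD^[n] ψ =
          PowerSeries.X * substSeries (majorantSeries n M) ![PowerSeries.X, eulerD^[n] ψ]) ∧
      (∀ ψ' : PowerSeries ℂ, PowerSeries.constantCoeff ψ' = 0 →
        (σ : ℂ) • eulerD^[n] ψ' =
          PowerSeries.X * substSeries (majorantSeries n M) ![PowerSeries.X, eulerD^[n] ψ'] →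
        ψ' = ψ) ∧
      PosRadius ψ ∧
      (∀ j : ℕ, 1 ≤ j → ∃ C : ℝ, 0 ≤ C ∧ PowerSeries.coeff j ψ = (C : ℂ) ∧
        ‖PowerSeries.coeff j ψhat‖ ≤ C) := by
  have hσpos : 0 < σ := hσ ▸ iInf_norm_eval_div_pow_pos hdeg hLk
  have hσL : ∀ j : ℕ, 0 < σ * ((j + 1 : ℕ) : ℝ) ^ n ∧
      σ * ((j + 1 : ℕ) : ℝ) ^ n ≤ ‖L.eval ((j + 1 + k : ℕ) : ℂ)‖ := fun j =>
    ⟨by positivity, (le_div_iff₀ (by positivity)).1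
      (hσ ▸ ciInf_le ⟨0, by rintro _ ⟨i, rfl⟩; positivity⟩ j)⟩
  have hF := isCausal_substSeries_X_iterate_eulerD n (majorantSeries n M)
  obtain ⟨ψ, hψ, huniq⟩ := hF.existsUnique_picardMap_eq_self
    (ℓ := fun j => ((σ * (j : ℝ) ^ n : ℝ) : ℂ))
  obtain ⟨hψ0, hψeq⟩ := (picardMap_eq_self_iff_smul_iterate_eulerD n hσpos.ne' ψ).1 hψ
  have hdom : Majorizes ψhat ψ := majorizes_of_picardMap_eq_self
    (isCausal_substSeries_phiArgs n M) hF hσL (fun _ _ => majorizes_substSeries_phiArgs n M)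
    ((picardMap_eq_self_iff_LpolyOp hLk ψhat).2 ⟨hψhat0, hψhat⟩) hψ
  refine ⟨hσpos, ψ, ⟨hψ0, hψeq⟩, fun ψ' h0 heq =>
    huniq ψ' ((picardMap_eq_self_iff_smul_iterate_eulerD n hσpos.ne' ψ').2 ⟨h0, heq⟩), ?_,
    fun j _ => hdom.exists_real_coeff j⟩
  exact .of_iterate_eulerD hψ0 (posRadius_of_smul_eq_X_mul_substSeries hM.majorantSeries
    (Complex.ofReal_ne_zero.2 hσpos.ne') (constantCoeff_iterate_eulerD hψ0 n) hψeq)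

/-- **Lemma 2**: the majorant equation `σ·δⁿv = z·M̃(z, δⁿv)` has a unique formal power
series solution `ψ` with zero constant term; `ψ` converges near zero, has nonnegative real
coefficients, and is a majorant series for the formal solution `ψ̂` of
`L̄(δ+k)ψ̂ = z·M(z, ψ̂, δψ̂, …, δⁿψ̂)`. -/
theorem majorant_equation_lemma (n : ℕ) (hn : 1 ≤ n)
    (L : Polynomial ℂ) (hdeg : L.degree = (n : ℕ)) (k : ℕ)
    (hLk : ∀ j : ℕ, 1 ≤ j → L.eval ((j + k : ℕ) : ℂ) ≠ 0)
    (σ : ℝ)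
    (hσ : σ = ⨅ j : ℕ, ‖L.eval ((j + 1 + k : ℕ) : ℂ)‖ / ((j + 1 : ℕ) : ℝ) ^ n)
    (M : MvPowerSeries (Fin (n + 2)) ℂ) (hM : ConvNearZero M)
    (ψhat : PowerSeries ℂ) (hψhat0 : PowerSeries.constantCoeff ψhat = 0)
    (hψhat : LpolyOp L k ψhat = PowerSeries.X * substSeries M (phiArgs n ψhat)) :
    0 < σ ∧
    ∃ ψ : PowerSeries ℂ,
      (PowerSeries.constantCoeff ψ = 0 ∧
        (σ : ℂ) • eulerD^[n] ψ =
          PowerSeries.X * substSeries (majorantSeries n M) ![PowerSeries.X, eulerD^[n] ψ]) ∧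
      (∀ ψ' : PowerSeries ℂ, PowerSeries.constantCoeff ψ' = 0 →
        (σ : ℂ) • eulerD^[n] ψ' =
          PowerSeries.X * substSeries (majorantSeries n M) ![PowerSeries.X, eulerD^[n] ψ'] →
        ψ' = ψ) ∧
      PosRadius ψ ∧
      (∀ j : ℕ, 1 ≤ j → ∃ C : ℝ, 0 ≤ C ∧ PowerSeries.coeff j ψ = (C : ℂ) ∧
        ‖PowerSeries.coeff j ψhat‖ ≤ C) :=
  majorant_equation_lemma_general n L hdeg k hLk σ hσ M hM ψhat hψhat0 hψhat
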